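/- Fix an integer n ≥ 1, set N = 2n + 3, and let V, F, the Verlinde product, and the structure constants N_{ab}^c be as defined. Then for all integers a, b, c with 0 ≤ a, b, c ≤ n one has N_{ab}^c = (−1)^{a+b+c} · |N_{ab}^c|. Equivalently, in the twisted basis ẽ_a := (−1)^a e_a (0 ≤ a ≤ n) all structure constants of the Verlinde product are nonnegative: if ẽ_a · ẽ_b = Σ_c Ñ_{ab}^c ẽ_c then Ñ_{ab}^c = |N_{ab}^c| ≥ 0 for all a, b, c. -/

import Mathlib

open BigOperators

/-- The folding map `F : ℕ → V` for type `A₂⁽²⁾` at level `2n`, where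
`V = Fin (n+1) → ℤ` is the free ℤ-module with basis `e₀, …, e_n` and
`N = 2n + 3`:  `F m = e_{m'}` if `m ≡ m' (mod N)` with `0 ≤ m' ≤ n`;
`F m = 0` if `m ≡ N - 1 (mod N)`; `F m = -e_{m'}` if `m + m' + 2 ≡ 0 (mod N)`
with `0 ≤ m' ≤ n`. -/
def foldA2 (n m : ℕ) : Fin (n + 1) → ℤ :=
  if h : m % (2 * n + 3) ≤ n then
    Pi.single (⟨m % (2 * n + 3), by omega⟩ : Fin (n + 1)) 1
  else if h2 : m % (2 * n + 3) = 2 * n + 2 then 0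
  else - Pi.single (⟨2 * n + 1 - m % (2 * n + 3), by omega⟩ : Fin (n + 1)) 1

/-- The basis vector `e_m` of `V = Fin (n+1) → ℤ` (zero if `m > n`). -/
def eN (n m : ℕ) : Fin (n + 1) → ℤ :=
  if h : m ≤ n then Pi.single (⟨m, by omega⟩ : Fin (n + 1)) 1 else 0

/-- The Verlinde product on `V = Fin (n+1) → ℤ`: the ℤ-bilinear product with
`e_a · e_b = ∑_{i=0}^{min a b} F (a + b - 2 i)`. -/
def vmul (n : ℕ) (x y : Fin (n + 1) → ℤ) : Fin (n + 1) → ℤ :=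
  fun c => ∑ a : Fin (n + 1), ∑ b : Fin (n + 1),
    x a * y b * (∑ i ∈ Finset.range (min a.1 b.1 + 1), foldA2 n (a.1 + b.1 - 2 * i)) c

/-- The structure constants `N_{ab}^c` of the Verlinde product, defined by
`e_a · e_b = ∑_c N_{ab}^c e_c`. -/
def Nconst (n a b c : ℕ) : ℤ :=
  if h : c ≤ n then vmul n (eN n a) (eN n b) ⟨c, by omega⟩ else 0

/-!
Since `a + b ≤ 2n < N`, the folding map is only ever applied to `m ≤ 2n`, where it is
`F m = e_m` for `m ≤ n` and `F m = -e_{2n+1-m}` for `n < m ≤ 2n`. The reflection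
`m ↦ 2n + 1 - m` changes parity, so the `e_c`-coefficient of `F m` always has the sign
`(-1)^(m+c)`; as `a + b - 2i ≡ a + b (mod 2)`, every term of `e_a · e_b` contributes to
`N_{ab}^c` with the same sign `(-1)^(a+b+c)`.
-/

lemma neg_one_pow_mul_foldA2_nonneg {n m : ℕ} (hm : m ≤ 2 * n) (c : Fin (n + 1)) :
    0 ≤ (-1 : ℤ) ^ (m + c) * foldA2 n m c := by
  have hmod : m % (2 * n + 3) = m := Nat.mod_eq_of_lt (by omega)
  unfold foldA2
  simp only [hmod]
  split_ifs with hle hmax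
  · rw [Pi.single_apply]
    split_ifs with hcm
    · rw [hcm, ← two_mul, pow_mul, neg_one_sq, one_pow, one_mul]
      exact zero_le_one
    · rw [mul_zero]
  · rw [Pi.zero_apply, mul_zero]
  · rw [Pi.neg_apply, Pi.single_apply]
    split_ifs with hcm
    · have hodd : Odd (m + c) := ⟨n, by rw [hcm, Fin.val_mk]; omega⟩
      rw [hodd.neg_one_pow]
      exact zero_le_one
    · rw [neg_zero, mul_zero]

lemma vmul_smul (n : ℕ) (s t : ℤ) (x y : Fin (n + 1) → ℤ) :
    vmul n (s • x) (t • y) = (s * t) • vmul n x y := by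
  funext c
  simp only [vmul, Pi.smul_apply, smul_eq_mul, Finset.mul_sum]
  exact Finset.sum_congr rfl fun a _ => Finset.sum_congr rfl fun b _ => by ring

lemma vmul_eN_eN {n a b : ℕ} (ha : a ≤ n) (hb : b ≤ n) :
    vmul n (eN n a) (eN n b) =
      ∑ i ∈ Finset.range (min a b + 1), foldA2 n (a + b - 2 * i) := by
  funext c
  simp [vmul, eN, ha, hb, Pi.single_apply, Finset.sum_apply]

lemma neg_one_pow_mul_Nconst_nonneg {n a b c : ℕ} (ha : a ≤ n) (hb : b ≤ n) (hc : c ≤ n) :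
    0 ≤ (-1 : ℤ) ^ (a + b + c) * Nconst n a b c := by
  rw [Nconst, dif_pos hc, vmul_eN_eN ha hb, Finset.sum_apply, Finset.mul_sum]
  refine Finset.sum_nonneg fun i hi => ?_
  obtain ⟨hia, hib⟩ := le_min_iff.mp (Nat.lt_succ_iff.mp (Finset.mem_range.mp hi))
  have hsign : (-1 : ℤ) ^ (a + b + c) = (-1) ^ (a + b - 2 * i + c) := by
    rw [show a + b + c = a + b - 2 * i + c + 2 * i by omega, pow_add, pow_mul, neg_one_sq,
      one_pow, mul_one]
  rw [hsign]
  exact neg_one_pow_mul_foldA2_nonneg (by omega) ⟨c, Nat.lt_succ_of_le hc⟩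

lemma abs_eq_neg_one_pow_mul_of_nonneg {x : ℤ} {k : ℕ} (h : 0 ≤ (-1 : ℤ) ^ k * x) :
    |x| = (-1) ^ k * x := by
  rw [← abs_of_nonneg h, abs_mul, abs_neg_one_pow, one_mul]

/-- Sign pattern of the structure constants of the Verlinde algebra of type
`A₂⁽²⁾` at level `2n`: `N_{ab}^c = (-1)^{a+b+c} |N_{ab}^c|`.  Equivalently, in
the twisted basis `ẽ_a = (-1)^a e_a` the structure constants
`Ñ_{ab}^c = (-1)^c ⬝ (ẽ_a · ẽ_b)_c` are the nonnegative integers `|N_{ab}^c|`. -/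
theorem Nconst_sign_pattern (n : ℕ) (a b c : ℕ)
    (ha : a ≤ n) (hb : b ≤ n) (hc : c ≤ n) :
    Nconst n a b c = (-1 : ℤ) ^ (a + b + c) * |Nconst n a b c| ∧
    (-1 : ℤ) ^ c *
        vmul n (((-1 : ℤ) ^ a) • eN n a) (((-1 : ℤ) ^ b) • eN n b) ⟨c, by omega⟩
      = |Nconst n a b c| ∧
    (0 : ℤ) ≤ (-1 : ℤ) ^ c *
        vmul n (((-1 : ℤ) ^ a) • eN n a) (((-1 : ℤ) ^ b) • eN n b) ⟨c, by omega⟩ := by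
  have habs : |Nconst n a b c| = (-1) ^ (a + b + c) * Nconst n a b c :=
    abs_eq_neg_one_pow_mul_of_nonneg (neg_one_pow_mul_Nconst_nonneg ha hb hc)
  have htwist : (-1 : ℤ) ^ c *
      vmul n (((-1 : ℤ) ^ a) • eN n a) (((-1 : ℤ) ^ b) • eN n b) ⟨c, by omega⟩
      = |Nconst n a b c| := by
    rw [habs, vmul_smul, Pi.smul_apply, smul_eq_mul, Nconst, dif_pos hc, pow_add, pow_add]
    ring
  refine ⟨?_, htwist, htwist ▸ abs_nonneg _⟩
  rw [habs, ← mul_assoc, ← pow_add, Even.neg_one_pow ⟨_, rfl⟩, one_mul]
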